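/- Suppose the exponential maps α, β satisfy Condition F. Let m ∈ indec C and r ∈ indec R with dim_ℂ Ext¹_C(r,m) = dim_ℂ Ext¹_C(m,r) = 1, with nonsplit triangles m →μ a →γ r →δ Σm and r →σ b →η m →ζ Σr (δ, ζ nonzero), and suppose Gm, Ga, Gb have finite length in Mod R. Then α(a) = α(r)α(m)·β([Ker Gμ]) and α(b) = α(r)α(m) (the latter because Ker Gσ = 0, since Gr = 0). -/

import Mathlib

open CategoryTheory CategoryTheory.Limits CategoryTheory.Pretriangulated

noncomputable section

universe v u

variable (C : Type u) [Category.{v} C]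

/-- An object of an additive category is *indecomposable* if it is nonzero and
admits no nontrivial direct sum decomposition. -/
def Indec [Limits.HasZeroMorphisms C] [HasBinaryBiproducts C] (c : C) : Prop :=
  ¬ IsZero c ∧ ∀ x y : C, (c ≅ x ⊞ y) → IsZero x ∨ IsZero y

/-- An object of an abelian category has *finite length* iff its lattice of
subobjects satisfies both chain conditions. -/
def FinLength {M : Type*} [Category M] (X : M) : Prop :=
  WellFoundedGT (Subobject X) ∧ WellFoundedLT (Subobject X)

variable [Preadditive C] [Linear ℂ C] (R : Set C)

/-- `Mod R`: the abelian category of ℂ-linear contravariant functors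
`R → Vect ℂ`, realised as the functor category `Rᵒᵖ ⥤ ModuleCat ℂ`
on the full subcategory `R ⊆ C`. -/
abbrev ModCat : Type _ := (ObjectProperty.FullSubcategory fun x : C => x ∈ R)ᵒᵖ ⥤ ModuleCat.{v} ℂ

variable [HasZeroObject C] [HasShift C ℤ] [∀ n : ℤ, (shiftFunctor C n).Additive]
  [Pretriangulated C]

/-- The functor `G : C ⥤ Mod R`, `Gc = Hom_C(-, Σc)|_R`. -/
def Gfun : C ⥤ ModCat C R :=
  shiftFunctor C (1 : ℤ) ⋙ linearYoneda ℂ C ⋙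
    (Functor.whiskeringLeft _ _ _).obj (ObjectProperty.ι fun x : C => x ∈ R).op

variable [HasBinaryBiproducts C]

/-- **Condition F**: for each (distinguished) triangle `x →φ y →ω z →ψ Σx` in
`C` such that `Gx`, `Gy`, `Gz` have finite length in `Mod R`, the following
property holds: `α(y) = α(x ⊕ z) · β([Ker Gφ])`. -/
def ConditionF {K A : Type*} [CommRing A] (k : ModCat C R → K)
    (α : C → A) (β : K → A) : Prop :=
  ∀ T ∈ distTriang C,
    FinLength ((Gfun C R).obj T.obj₁) → FinLength ((Gfun C R).obj T.obj₂) →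
    FinLength ((Gfun C R).obj T.obj₃) →
    α T.obj₂ = α (T.obj₁ ⊞ T.obj₃) * β (k (kernel ((Gfun C R).map T.mor₁)))

/-! Rigidity of `R` gives `Gr = Hom_C(-, Σr)|_R = 0`, so `Gr` has finite length and Condition F
applies to both triangles. In the second one `Ker Gσ` is a subobject of `Gr = 0`, so its
`β`-factor is `β 0 = 1`. -/

lemma FinLength.of_isZero {M : Type*} [Category M] [HasZeroMorphisms M] {X : M}
    (hX : IsZero X) : FinLength X :=
  have := Subobject.subsingleton_of_isZero hX
  ⟨inferInstance, inferInstance⟩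

lemma isZero_Gfun_obj {D : Type*} [Category D] [Preadditive D] [Linear ℂ D] [HasShift D ℤ]
    {S : Set D} {c : D} (h : ∀ x ∈ S, ∀ f : x ⟶ (shiftFunctor D (1 : ℤ)).obj c, f = 0) :
    IsZero ((Gfun D S).obj c) :=
  Functor.isZero _ fun X =>
    @ModuleCat.isZero_of_subsingleton _ _ _
      ⟨fun f g => (h _ X.unop.property f).trans (h _ X.unop.property g).symm⟩

section

variable {C R}

lemma ConditionF.eq_of_isZero_Gfun_obj₁ {K A : Type*} [Zero K] [CommRing A]
    {k : ModCat C R → K} {α : C → A} {β : K → A} (hF : ConditionF C R k α β)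
    (hk0 : ∀ X : ModCat C R, IsZero X → k X = 0) (hβ0 : β 0 = 1)
    {T : Triangle C} (hT : T ∈ distTriang C) (h₁ : IsZero ((Gfun C R).obj T.obj₁))
    (h₂ : FinLength ((Gfun C R).obj T.obj₂)) (h₃ : FinLength ((Gfun C R).obj T.obj₃)) :
    α T.obj₂ = α (T.obj₁ ⊞ T.obj₃) := by
  have hker : IsZero (kernel ((Gfun C R).map T.mor₁)) := h₁.of_mono (kernel.ι _)
  rw [hF T hT (.of_isZero h₁) h₂ h₃, hk0 _ hker, hβ0, mul_one]

end

theorem statement12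
    -- `R` is rigid: `Hom_C(R, ΣR) = 0` (context):
    (hrigid : ∀ r ∈ R, ∀ r' ∈ R, ∀ f : r ⟶ (shiftFunctor C (1 : ℤ)).obj r', f = 0)
    {K : Type*} [AddCommGroup K] (k : ModCat C R → K)
    -- the `K₀`-class of the zero object vanishes:
    (hk0 : ∀ X : ModCat C R, IsZero X → k X = 0)
    {A : Type*} [CommRing A] (α : C → A) (β : K → A)
    -- `α` and `β` are exponential:
    (hαadd : ∀ x y : C, α (x ⊞ y) = α x * α y)
    (hβ0 : β 0 = 1)
    -- `α` and `β` satisfy Condition F: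
    (hF : ConditionF C R k α β)
    -- `m ∈ indec C` and `r ∈ indec R`:
    (m r : C) (hrR : r ∈ R)
    -- the two nonsplit triangles, with `δ` and `ζ` nonzero:
    (a b : C) (μ : m ⟶ a) (γ : a ⟶ r) (δ : r ⟶ (shiftFunctor C (1 : ℤ)).obj m)
    (σ : r ⟶ b) (η : b ⟶ m) (ζ : m ⟶ (shiftFunctor C (1 : ℤ)).obj r)
    (hT1 : Triangle.mk μ γ δ ∈ distTriang C)
    (hT2 : Triangle.mk σ η ζ ∈ distTriang C)
    -- `Gm`, `Ga`, `Gb` have finite length in `Mod R`: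
    (hGm : FinLength ((Gfun C R).obj m))
    (hGa : FinLength ((Gfun C R).obj a))
    (hGb : FinLength ((Gfun C R).obj b)) :
    α a = α r * α m * β (k (kernel ((Gfun C R).map μ))) ∧
      α b = α r * α m := by
  have hGr : IsZero ((Gfun C R).obj r) := isZero_Gfun_obj fun x hx => hrigid x hx r hrR
  constructor
  · calc α a = α (m ⊞ r) * β (k (kernel ((Gfun C R).map μ))) :=
          hF _ hT1 hGm hGa (.of_isZero hGr)
      _ = α r * α m * β (k (kernel ((Gfun C R).map μ))) := by rw [hαadd, mul_comm (α m)]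
  · calc α b = α (r ⊞ m) := hF.eq_of_isZero_Gfun_obj₁ hk0 hβ0 hT2 hGr hGb hGm
      _ = α r * α m := hαadd r m

end
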